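/- arXiv:1607.00670 — 5 statements merged into one kernel-verified Lean document; each statement's English description precedes it below -/
import Mathlib

section
/- Let (a_n) be a strictly increasing sequence of positive integers with a_{n+1}/a_n → 1, and let (d_m) be a sequence in ℝ/ℤ such that 0 is a non-isolated point of the closure of {d_m}. Then the set {a_n · d_m : n, m ∈ ℕ} is dense in ℝ/ℤ. -/
/-!
Pick `d m` with a lift `η ≠ 0` so small that `a N * |η| < ε`, where `N` is such that
`a (n + 1) ≤ (1 + ε) a n` for `n ≥ N`. As long as `a n * |η|` stays below `1`, consecutive
terms differ by at most `ε * a n * |η| < ε`, while `a n * |η| → ∞`. So the real sequence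
`a n * |η|` cannot jump over any window `[ξ, ξ + ε)` with `0 ≤ ξ < 1`, and its image in `ℝ/ℤ`
comes `ε`-close to every point.
-/

open Filter Topology

lemma exists_mem_Ico_of_tendsto_atTop {u : ℕ → ℝ} (hu : Tendsto u atTop atTop)
    {ξ ε : ℝ} {N : ℕ} (hN : u N < ξ + ε) (hstep : ∀ n ≥ N, u n < ξ → u (n + 1) < ξ + ε) :
    ∃ n, u n ∈ Set.Ico ξ (ξ + ε) := by
  by_contra! hgap
  have hbelow : ∀ n ≥ N, u n < ξ := by
    intro n hn
    induction n, hn using Nat.le_induction with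
    | base => exact not_le.mp fun h => hgap N ⟨h, hN⟩
    | succ n hn ih => exact not_le.mp fun h => hgap (n + 1) ⟨h, hstep n hn ih⟩
  obtain ⟨n, hn, hξ⟩ := ((eventually_ge_atTop N).and (hu.eventually_ge_atTop ξ)).exists
  exact (hbelow n hn).not_ge hξ

lemma eventually_le_one_add_mul_of_tendsto_ratio {f : ℕ → ℝ} (hf : ∀ n, 0 < f n)
    (hratio : Tendsto (fun n => f (n + 1) / f n) atTop (𝓝 1)) {ε : ℝ} (hε : 0 < ε) :
    ∀ᶠ n in atTop, f (n + 1) ≤ (1 + ε) * f n := by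
  filter_upwards [(tendsto_order.mp hratio).2 (1 + ε) (by linarith)] with n hn
  exact ((div_lt_iff₀ (hf n)).mp hn).le

namespace UnitAddCircle

lemma dist_coe_le (u v : ℝ) : dist (u : UnitAddCircle) (v : UnitAddCircle) ≤ |u - v| := by
  rw [dist_eq_norm, ← AddCircle.coe_sub]
  exact QuotientAddGroup.norm_mk_le_norm

lemma exists_dist_nsmul_coe_lt_of_pos {a : ℕ → ℕ} (ha : Tendsto a atTop atTop) {δ ε : ℝ}
    (hδ : 0 < δ) {N : ℕ} (hstep : ∀ n ≥ N, (a (n + 1) : ℝ) ≤ (1 + ε) * a n)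
    (hN : a N * δ < ε) (x : UnitAddCircle) :
    ∃ n, dist (a n • (δ : UnitAddCircle)) x < ε := by
  obtain ⟨t, rfl⟩ := QuotientAddGroup.mk_surjective x
  set ξ := Int.fract t
  have hu : Tendsto (fun n => (a n : ℝ) * δ) atTop atTop :=
    (tendsto_natCast_atTop_atTop.comp ha).atTop_mul_const hδ
  have hu_step : ∀ n ≥ N, (a n : ℝ) * δ < ξ → (a (n + 1) : ℝ) * δ < ξ + ε := by
    intro n hn hlt
    have hε : 0 < ε := lt_of_le_of_lt (by positivity) hN
    have hlt_one : (a n : ℝ) * δ < 1 := hlt.trans (Int.fract_lt_one t)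
    calc (a (n + 1) : ℝ) * δ ≤ (1 + ε) * a n * δ := by gcongr; exact hstep n hn
      _ = a n * δ + ε * (a n * δ) := by ring
      _ < ξ + ε := by nlinarith [Int.fract_nonneg t]
  obtain ⟨n, hlo, hhi⟩ := exists_mem_Ico_of_tendsto_atTop hu
    (hN.trans_le (le_add_of_nonneg_left (Int.fract_nonneg t))) hu_step
  refine ⟨n, ?_⟩
  calc dist (a n • (δ : UnitAddCircle)) (t : UnitAddCircle)
      = dist (((a n : ℝ) * δ : ℝ) : UnitAddCircle) (ξ : UnitAddCircle) := by
        rw [← AddCircle.coe_nsmul, nsmul_eq_mul, AddCircle.coe_fract]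
    _ ≤ |(a n : ℝ) * δ - ξ| := dist_coe_le _ _
    _ < ε := by rw [abs_lt]; constructor <;> linarith

lemma exists_dist_nsmul_coe_lt {a : ℕ → ℕ} (ha : Tendsto a atTop atTop) {η ε : ℝ}
    (hη : η ≠ 0) {N : ℕ} (hstep : ∀ n ≥ N, (a (n + 1) : ℝ) ≤ (1 + ε) * a n)
    (hN : a N * |η| < ε) (x : UnitAddCircle) :
    ∃ n, dist (a n • (η : UnitAddCircle)) x < ε := by
  rcases hη.lt_or_gt with hneg | hpos
  · obtain ⟨n, hn⟩ := exists_dist_nsmul_coe_lt_of_pos ha (neg_pos.mpr hneg) hstep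
      (by rwa [abs_of_neg hneg] at hN) (-x)
    refine ⟨n, ?_⟩
    rwa [AddCircle.coe_neg, smul_neg, dist_neg, neg_neg] at hn
  · exact exists_dist_nsmul_coe_lt_of_pos ha hpos hstep (by rwa [abs_of_pos hpos] at hN) x

lemma exists_coe_mem_of_accPt_zero {s : Set UnitAddCircle} (hs : AccPt 0 (𝓟 s)) {r : ℝ}
    (hr : 0 < r) : ∃ η : ℝ, η ≠ 0 ∧ |η| < r ∧ (η : UnitAddCircle) ∈ s := by
  obtain ⟨y, ⟨hy, hys⟩, hy0⟩ := accPt_iff_nhds.mp hs _ (Metric.ball_mem_nhds 0 hr)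
  rw [Metric.mem_ball, dist_zero_right] at hy
  obtain ⟨η, rfl, hη⟩ := QuotientAddGroup.exists_norm_mk_lt y (sub_pos.mpr hy)
  refine ⟨η, ?_, by simpa using hη, hys⟩
  rintro rfl
  exact hy0 rfl

end UnitAddCircle

theorem furstenberg_lemma_density_of_non_lacunary
    (a : ℕ → ℕ) (d : ℕ → UnitAddCircle)
    (ha_pos : ∀ n, 0 < a n) (ha_mono : StrictMono a)
    (ha_ratio : Tendsto (fun n => (a (n + 1) : ℝ) / (a n : ℝ)) atTop (𝓝 1))
    (hd : AccPt (0 : UnitAddCircle) (𝓟 (Set.range d))) :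
    Dense {y : UnitAddCircle | ∃ n m : ℕ, y = a n • d m} := by
  rw [Metric.dense_iff]
  intro x ε hε
  obtain ⟨N, hstep⟩ := eventually_atTop.mp <|
    eventually_le_one_add_mul_of_tendsto_ratio (fun n => Nat.cast_pos.mpr (ha_pos n)) ha_ratio hε
  have haN : (0 : ℝ) < a N := Nat.cast_pos.mpr (ha_pos N)
  obtain ⟨η, hη0, hηsmall, m, hm⟩ :=
    UnitAddCircle.exists_coe_mem_of_accPt_zero hd (div_pos hε haN)
  obtain ⟨n, hn⟩ := UnitAddCircle.exists_dist_nsmul_coe_lt ha_mono.tendsto_atTop hη0 hstep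
    (by rwa [lt_div_iff₀' haN] at hηsmall) x
  exact ⟨_, hn, n, m, by rw [hm]⟩
end

section
/- Let X be a compact metric space and T : X → X a homeomorphism that is forward-expansive, i.e., there exists c > 0 such that for all distinct x, y ∈ X there exists n ≥ 0 with d(Tⁿx, Tⁿy) > c. Then X is finite. -/
/-- Schwartzman's lemma: a forward-expansive homeomorphism of a compact metric
space can only exist on a finite space. -/
theorem schwartzman_lemma {X : Type*} [MetricSpace X] [CompactSpace X]
    (T : X ≃ₜ X) (c : ℝ) (hc : 0 < c)
    (hexp : ∀ x y : X, x ≠ y → ∃ n : ℕ, c < dist ((⇑T)^[n] x) ((⇑T)^[n] y)) :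
    Finite X := by
  set f : X → X := ⇑T with hf
  set g : X → X := ⇑T.symm with hg
  have hfg : Function.LeftInverse f g := T.apply_symm_apply
  have hgf : Function.LeftInverse g f := T.symm_apply_apply
  have hfc : Continuous f := T.continuous
  have hgc : Continuous g := T.symm.continuous
  -- Step 1: uniform expansiveness
  have step1 : ∀ ε > (0:ℝ), ∃ N : ℕ, ∀ x y : X,
      (∀ n ≤ N, dist (f^[n] x) (f^[n] y) ≤ c) → dist x y < ε := by
    intro ε hε
    by_contra h
    push_neg at h
    set K : ℕ → Set (X × X) := fun N =>
      {p | (∀ n ≤ N, dist (f^[n] p.1) (f^[n] p.2) ≤ c) ∧ ε ≤ dist p.1 p.2} with hK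
    have hKne : ∀ N, (K N).Nonempty := by
      intro N; obtain ⟨x, y, h1, h2⟩ := h N; exact ⟨(x, y), h1, h2⟩
    have hKsub : ∀ N, K (N + 1) ⊆ K N := by
      rintro N p ⟨h1, h2⟩
      exact ⟨fun n hn => h1 n (hn.trans (Nat.le_succ N)), h2⟩
    have hKclosed : ∀ N, IsClosed (K N) := by
      intro N
      have h1 : IsClosed {p : X × X | ∀ n ≤ N, dist (f^[n] p.1) (f^[n] p.2) ≤ c} := by
        have e : {p : X × X | ∀ n ≤ N, dist (f^[n] p.1) (f^[n] p.2) ≤ c}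
            = ⋂ n ∈ Set.Iic N, {p : X × X | dist (f^[n] p.1) (f^[n] p.2) ≤ c} := by
          ext p; simp
        rw [e]
        refine isClosed_biInter fun n _ => ?_
        exact isClosed_le (Continuous.dist ((hfc.iterate n).comp continuous_fst)
          ((hfc.iterate n).comp continuous_snd)) continuous_const
      have h2 : IsClosed {p : X × X | ε ≤ dist p.1 p.2} :=
        isClosed_le continuous_const (continuous_fst.dist continuous_snd)
      exact h1.inter h2
    obtain ⟨p, hp⟩ := IsCompact.nonempty_iInter_of_sequence_nonempty_isCompact_isClosed
      K hKsub hKne ((hKclosed 0).isCompact) hKclosed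
    have hp' : ∀ N, p ∈ K N := Set.mem_iInter.mp hp
    have hne : p.1 ≠ p.2 := by
      intro hpq
      have := (hp' 0).2
      rw [hpq, dist_self] at this
      linarith
    obtain ⟨n, hn⟩ := hexp p.1 p.2 hne
    have := (hp' n).1 n le_rfl
    exact absurd hn (not_lt.mpr this)
  -- Step 2: modulus for g
  obtain ⟨δ, hδpos, hδ⟩ := Metric.uniformContinuous_iff.mp
    (CompactSpace.uniformContinuous_of_continuous hgc) c hc
  set δ₀ : ℝ := min δ c with hδ₀def
  have hδ₀pos : 0 < δ₀ := lt_min hδpos hc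
  have hδ₀ : ∀ x y : X, dist x y < δ₀ → dist (g x) (g y) ≤ c := by
    intro x y hxy
    exact le_of_lt (hδ (lt_of_lt_of_le hxy (min_le_left _ _)))
  -- Step 2b: window modulus for f
  have step2b : ∀ N : ℕ, ∃ η > (0:ℝ), ∀ x y : X, dist x y < η →
      ∀ n ≤ N, dist (f^[n] x) (f^[n] y) ≤ c := by
    intro N
    induction N with
    | zero =>
      refine ⟨c, hc, fun x y hxy n hn => ?_⟩
      interval_cases n
      simpa using hxy.le
    | succ N ih =>
      obtain ⟨η, hηpos, hη⟩ := ih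
      obtain ⟨θ, hθpos, hθ⟩ := Metric.uniformContinuous_iff.mp
        (CompactSpace.uniformContinuous_of_continuous (hfc.iterate (N + 1))) c hc
      refine ⟨min η θ, lt_min hηpos hθpos, fun x y hxy n hn => ?_⟩
      rcases Nat.lt_or_ge n (N + 1) with h | h
      · exact hη x y (lt_of_lt_of_le hxy (min_le_left _ _)) n (Nat.lt_succ_iff.mp h)
      · have : n = N + 1 := le_antisymm hn h
        subst this
        exact le_of_lt (hθ (lt_of_lt_of_le hxy (min_le_right _ _)))
  -- the key window predicate
  obtain ⟨N, hN⟩ := step1 δ₀ hδ₀pos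
  set P : X → X → Prop := fun x y => ∀ n ≤ N, dist (f^[n] x) (f^[n] y) ≤ c with hP
  -- backward invariance
  have back : ∀ x y : X, P x y → P (g x) (g y) := by
    intro x y hxy n hn
    match n with
    | 0 =>
      simpa using hδ₀ x y (hN x y hxy)
    | (m + 1) =>
      have h1 : f^[m + 1] (g x) = f^[m] x := by
        rw [Function.iterate_succ_apply, hfg x]
      have h2 : f^[m + 1] (g y) = f^[m] y := by
        rw [Function.iterate_succ_apply, hfg y]
      rw [h1, h2]
      exact hxy m ((Nat.le_succ m).trans hn)
  have backIter : ∀ (j : ℕ) (x y : X), P x y → P (g^[j] x) (g^[j] y) := by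
    intro j
    induction j with
    | zero => intro x y hxy; simpa using hxy
    | succ j ih =>
      intro x y hxy
      rw [Function.iterate_succ_apply', Function.iterate_succ_apply']
      exact back _ _ (ih x y hxy)
  -- contraction
  have contract : ∀ ε > (0:ℝ), ∃ J : ℕ, ∀ x y : X, P x y →
      dist (g^[J] x) (g^[J] y) < ε := by
    intro ε hε
    obtain ⟨N', hN'⟩ := step1 ε hε
    refine ⟨N', fun x y hxy => hN' _ _ fun n hn => ?_⟩
    have key : ∀ z : X, f^[n] (g^[N'] z) = g^[N' - n] z := by
      intro z
      have h1 : g^[N'] z = g^[n] (g^[N' - n] z) := by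
        rw [← Function.iterate_add_apply]
        congr 1
        omega
      rw [h1, (hfg.iterate n) _]
    rw [key x, key y]
    have := (backIter (N' - n) x y hxy) 0 (Nat.zero_le N)
    simpa using this
  -- η-close pairs satisfy P
  obtain ⟨η, hηpos, hη⟩ := step2b N
  -- finite cover by η/3-balls
  obtain ⟨t, -, htfin, htcov⟩ :=
    finite_cover_balls_of_compact (isCompact_univ (X := X)) (show (0:ℝ) < η / 3 by linarith)
  -- counting argument
  classical
  by_contra hinf
  rw [not_finite_iff_infinite] at hinf
  obtain ⟨s, hscard⟩ := Infinite.exists_subset_card_eq X (htfin.toFinset.card + 1)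
  -- t is nonempty via covering a point of X
  have hXne : Nonempty X := Infinite.nonempty X
  -- s has at least two elements
  have htne : htfin.toFinset.card ≥ 1 := by
    by_contra ht0
    push_neg at ht0
    have : htfin.toFinset = ∅ := Finset.card_eq_zero.mp (by omega)
    obtain ⟨x⟩ := hXne
    have hx := htcov (Set.mem_univ x)
    simp only [Set.mem_iUnion] at hx
    obtain ⟨y, hy, -⟩ := hx
    have : y ∈ htfin.toFinset := htfin.mem_toFinset.mpr hy
    simp [‹htfin.toFinset = ∅›] at this
  have hs2 : 1 < s.card := by omega
  obtain ⟨a0, ha0, b0, hb0, hab0⟩ := Finset.one_lt_card.mp hs2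
  have hoffne : s.offDiag.Nonempty := ⟨(a0, b0), Finset.mem_offDiag.mpr ⟨ha0, hb0, hab0⟩⟩
  set ε : ℝ := s.offDiag.inf' hoffne fun p => dist p.1 p.2 with hεdef
  have hεpos : 0 < ε := by
    rw [hεdef, Finset.lt_inf'_iff]
    rintro ⟨a, b⟩ hab
    obtain ⟨-, -, hne⟩ := Finset.mem_offDiag.mp hab
    exact dist_pos.mpr hne
  obtain ⟨J, hJ⟩ := contract ε hεpos
  -- map each point of s to a ball center near its J-th forward image
  have hchoice : ∀ a : X, ∃ y ∈ htfin.toFinset, dist (f^[J] a) y < η / 3 := by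
    intro a
    have hx := htcov (Set.mem_univ (f^[J] a))
    simp only [Set.mem_iUnion] at hx
    obtain ⟨y, hy, hball⟩ := hx
    exact ⟨y, htfin.mem_toFinset.mpr hy, Metric.mem_ball.mp hball⟩
  choose φ hφmem hφdist using hchoice
  have hinj : Set.InjOn φ ↑s := by
    intro a ha b hb hab
    by_contra hne
    have hd : dist (f^[J] a) (f^[J] b) < η := by
      have h1 := hφdist a
      have h2 := hφdist b
      rw [hab] at h1
      calc dist (f^[J] a) (f^[J] b) ≤ dist (f^[J] a) (φ b) + dist (φ b) (f^[J] b) :=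
              dist_triangle _ _ _
        _ = dist (f^[J] a) (φ b) + dist (f^[J] b) (φ b) := by rw [dist_comm (φ b)]
        _ < η / 3 + η / 3 := by linarith
        _ < η := by linarith
    have hPab : P (f^[J] a) (f^[J] b) := hη _ _ hd
    have hlt := hJ _ _ hPab
    rw [(hgf.iterate J) a, (hgf.iterate J) b] at hlt
    have hge : ε ≤ dist a b := by
      rw [hεdef]
      exact Finset.inf'_le (fun p => dist p.1 p.2)
        (show (a, b) ∈ s.offDiag from
          Finset.mem_offDiag.mpr ⟨Finset.mem_coe.mp ha, Finset.mem_coe.mp hb, hne⟩)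
    linarith
  have hcard := Finset.card_le_card_of_injOn φ (fun a ha => hφmem a) hinj
  omega
end

section
/- Let q ≥ 2 be an integer, x an irrational real number, and let 𝒪 be the closure in ℝ/ℤ of the forward orbit {qⁿ x mod 1 : n ∈ ℕ}. Then for every n ∈ ℕ, the difference set 𝒪 − 𝒪 contains a point of the form ℓ_n/q^n with ℓ_n ∈ {1, …, qⁿ − 1}. -/
/-!
Put `Q = qⁿ`. Two distinct points `a, b` of the orbit closure `𝒪` with `Q • a = Q • b` give a nonzero
`Q`-torsion point `a - b = ℓ / Q`, so it suffices that `Q • ·` is not injective on `𝒪`. But `𝒪` is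
compact, `Q • ·`-invariant and infinite (an irrational point has infinite order), and `Q • ·`
multiplies small distances by `Q > 1`. An injective continuous self-map of a compact set has a
uniformly continuous inverse; if it is also locally expanding, any two distinct points have iterates
that are eventually `η`-apart for one fixed `η > 0`. A compact set holds only boundedly many
`η`-separated points, so it must be finite.
-/

open Pointwise Filter Set

section Expanding

variable {X : Type*} [MetricSpace X] {K : Set X} {f : X → X}

theorem IsCompact.exists_pos_forall_dist_lt_of_injOn (hK : IsCompact K) (hf : ContinuousOn f K)
    (hinj : InjOn f K) {δ : ℝ} (hδ : 0 < δ) :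
    ∃ η > 0, ∀ a ∈ K, ∀ b ∈ K, dist (f a) (f b) < η → dist a b < δ := by
  set C := {p ∈ K ×ˢ K | δ ≤ dist p.1 p.2}
  have hC : IsCompact C :=
    (hK.prod hK).inter_right (isClosed_le continuous_const continuous_dist)
  rcases C.eq_empty_or_nonempty with hempty | hne
  · refine ⟨1, one_pos, fun a ha b hb _ => not_le.1 fun hab => ?_⟩
    exact hempty.subset (⟨⟨ha, hb⟩, hab⟩ : (a, b) ∈ C)
  have hcont : ContinuousOn (fun p : X × X => dist (f p.1) (f p.2)) C :=
    continuous_dist.comp_continuousOn <| .prodMk (hf.comp continuousOn_fst fun _ hp => hp.1.1)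
      (hf.comp continuousOn_snd fun _ hp => hp.1.2)
  -- `η` is the least distance between images of points at least `δ` apart.
  obtain ⟨p, ⟨⟨hp₁, hp₂⟩, hp⟩, hmin⟩ := hC.exists_isMinOn hne hcont
  refine ⟨dist (f p.1) (f p.2), dist_pos.2 fun h => ?_, fun a ha b hb hab => not_le.1 fun h => ?_⟩
  · exact (hδ.trans_le hp).ne' (dist_eq_zero.2 (hinj hp₁ hp₂ h))
  · exact hab.not_ge (isMinOn_iff.1 hmin (a, b) ⟨⟨ha, hb⟩, h⟩)

theorem IsCompact.exists_card_le_of_forall_le_dist (hK : IsCompact K) {η : ℝ} (hη : 0 < η) :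
    ∃ N : ℕ, ∀ {ι : Type*} (s : Finset ι) (g : ι → X), MapsTo g s K →
      (∀ i ∈ s, ∀ j ∈ s, i ≠ j → η ≤ dist (g i) (g j)) → s.card ≤ N := by
  obtain ⟨t, -, ht, hcover⟩ := finite_cover_balls_of_compact hK (half_pos hη)
  refine ⟨ht.toFinset.card, fun s g hg hsep => not_lt.1 fun hlt => ?_⟩
  have hcenter : ∀ x ∈ K, ∃ z ∈ t, dist x z < η / 2 := fun x hx => by
    simpa using hcover hx
  choose! z hzt hz using hcenter
  obtain ⟨i, hi, j, hj, hij, hzij⟩ := Finset.exists_ne_map_eq_of_card_lt_of_maps_to hlt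
    (f := fun i => z (g i)) fun i hi => by simpa using hzt _ (hg hi)
  have hzi := hz _ (hg hi)
  have hzj := hz _ (hg hj)
  rw [hzij] at hzi
  linarith [hsep i hi j hj hij, dist_triangle_right (g i) (g j) (z (g j))]

theorem pow_mul_dist_le_dist_iterate (hmaps : MapsTo f K K) {c η : ℝ} (hc : 1 ≤ c)
    (hexp : ∀ a ∈ K, ∀ b ∈ K, dist (f a) (f b) < η → c * dist a b ≤ dist (f a) (f b)) :
    ∀ (J : ℕ), ∀ a ∈ K, ∀ b ∈ K, dist (f^[J] a) (f^[J] b) < η →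
      c ^ J * dist a b ≤ dist (f^[J] a) (f^[J] b) := by
  intro J
  induction J with
  | zero => simp
  | succ J ih =>
    intro a ha b hb hJ
    simp only [Function.iterate_succ_apply] at hJ ⊢
    have hfab := ih (f a) (hmaps ha) (f b) (hmaps hb) hJ
    have hcJ : 1 ≤ c ^ J := one_le_pow₀ hc
    have hlt : dist (f a) (f b) < η := by nlinarith [dist_nonneg (x := f a) (y := f b)]
    calc c ^ (J + 1) * dist a b = c ^ J * (c * dist a b) := by ring
      _ ≤ c ^ J * dist (f a) (f b) := by gcongr; exact hexp a ha b hb hlt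
      _ ≤ _ := hfab

theorem IsCompact.finite_of_injOn_of_expanding (hK : IsCompact K) (hf : ContinuousOn f K)
    (hmaps : MapsTo f K K) (hinj : InjOn f K) {c δ : ℝ} (hc : 1 < c) (hδ : 0 < δ)
    (hexp : ∀ a ∈ K, ∀ b ∈ K, dist a b < δ → c * dist a b ≤ dist (f a) (f b)) :
    K.Finite := by
  obtain ⟨η, hη, hback⟩ := hK.exists_pos_forall_dist_lt_of_injOn hf hinj hδ
  have hrigid := pow_mul_dist_le_dist_iterate hmaps hc.le
    fun a ha b hb h => hexp a ha b hb (hback a ha b hb h)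
  have hsep : ∀ a ∈ K, ∀ b ∈ K, a ≠ b → ∀ᶠ J in atTop, η ≤ dist (f^[J] a) (f^[J] b) := by
    intro a ha b hb hab
    have hgrow : Tendsto (fun J : ℕ => c ^ J * dist a b) atTop atTop :=
      (tendsto_pow_atTop_atTop_of_one_lt hc).atTop_mul_const (dist_pos.2 hab)
    filter_upwards [hgrow.eventually_gt_atTop η] with J hJ
    exact not_lt.1 fun h => (hrigid J a ha b hb h).not_gt (h.trans hJ)
  obtain ⟨N, hN⟩ := hK.exists_card_le_of_forall_le_dist hη
  by_contra hinf
  obtain ⟨s, hsK, hs⟩ := Set.Infinite.exists_subset_card_eq hinf (N + 1)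
  have hJ : ∀ᶠ J in atTop, ∀ a ∈ s, ∀ b ∈ s, a ≠ b → η ≤ dist (f^[J] a) (f^[J] b) :=
    (eventually_all_finset s).2 fun a ha => (eventually_all_finset s).2 fun b hb =>
      (eventually_imp_distrib_left).2 fun hab => hsep a (hsK ha) b (hsK hb) hab
  obtain ⟨J, hJ⟩ := hJ.exists
  have := hN s (f^[J]) (fun a ha => hmaps.iterate J (hsK ha)) hJ
  omega

end Expanding

theorem AddCircle.norm_nsmul_eq_mul_norm {p : ℝ} (hp : p ≠ 0) {n : ℕ} {z : AddCircle p}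
    (hz : n * ‖z‖ ≤ |p| / 2) : ‖n • z‖ = n * ‖z‖ := by
  obtain ⟨x, rfl⟩ := QuotientAddGroup.mk_surjective z
  set r := x - round (p⁻¹ * x) * p
  have hr : (r : AddCircle p) = x := by
    rw [AddCircle.coe_sub, sub_eq_self, ← zsmul_eq_mul, AddCircle.coe_zsmul, AddCircle.coe_period,
      smul_zero]
  have hnorm : ‖(x : AddCircle p)‖ = |r| := AddCircle.norm_eq p
  rw [hnorm] at hz ⊢
  rw [← hr, ← AddCircle.coe_nsmul, (AddCircle.norm_coe_eq_abs_iff p hp).2, nsmul_eq_mul, abs_mul,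
    Nat.abs_cast]
  rwa [nsmul_eq_mul, abs_mul, Nat.abs_cast]

theorem AddCircle.dist_nsmul_eq_mul_dist {p : ℝ} (hp : p ≠ 0) {n : ℕ} {a b : AddCircle p}
    (hab : n * dist a b ≤ |p| / 2) : dist (n • a) (n • b) = n * dist a b := by
  rw [dist_eq_norm] at hab ⊢
  rw [dist_eq_norm, ← nsmul_sub, AddCircle.norm_nsmul_eq_mul_norm hp hab]

theorem infinite_setOf_pow_nsmul {G : Type*} [AddLeftCancelMonoid G] {a : G}
    (ha : ¬IsOfFinAddOrder a) {q : ℕ} (hq : 1 < q) : {y | ∃ m : ℕ, y = q ^ m • a}.Infinite := by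
  have hrange : {y | ∃ m : ℕ, y = q ^ m • a} = range fun m : ℕ => q ^ m • a := by
    ext; simp [eq_comm]
  rw [hrange]
  exact infinite_range_of_injective
    ((injective_nsmul_iff_not_isOfFinAddOrder.2 ha).comp (Nat.pow_right_injective hq))

theorem mapsTo_nsmul_closure_setOf_pow_nsmul {G : Type*} [AddMonoid G] [TopologicalSpace G]
    [ContinuousAdd G] (a : G) (q n : ℕ) :
    MapsTo (q ^ n • ·) (closure {y | ∃ m : ℕ, y = q ^ m • a})
      (closure {y | ∃ m : ℕ, y = q ^ m • a}) :=
  MapsTo.closure (fun _ ⟨m, hm⟩ => ⟨n + m, by rw [hm, smul_smul, pow_add]⟩)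
    (continuous_const_smul _)

theorem Irrational.not_isOfFinAddOrder_coe {x : ℝ} (hx : Irrational x) :
    ¬IsOfFinAddOrder (x : UnitAddCircle) :=
  AddCircle.not_isOfFinAddOrder_iff_forall_rat_ne_div.2 fun r h => hx ⟨r, by simpa using h⟩

theorem AddCircle.exists_nat_div_eq_sub_of_nsmul_eq {p : ℝ} [Fact (0 < p)] {N : ℕ} (hN : 0 < N)
    {a b : AddCircle p} (hab : N • a = N • b) (hne : a ≠ b) :
    ∃ ℓ : ℕ, 0 < ℓ ∧ ℓ < N ∧ ((ℓ / N * p : ℝ) : AddCircle p) = a - b := by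
  obtain ⟨ℓ, hℓN, hℓ⟩ := (AddCircle.nsmul_eq_zero_iff hN).1
    (show N • (a - b) = 0 by rw [nsmul_sub, hab, sub_self])
  refine ⟨ℓ, Nat.pos_of_ne_zero ?_, hℓN, hℓ⟩
  rintro rfl
  exact hne (sub_eq_zero.1 (by simpa using hℓ.symm))

theorem not_injOn_nsmul_closure_setOf_pow_nsmul {a : UnitAddCircle} (ha : ¬IsOfFinAddOrder a)
    {q : ℕ} (hq : 1 < q) {n : ℕ} (hn : n ≠ 0) :
    ¬InjOn (q ^ n • ·) (closure {y | ∃ m : ℕ, y = q ^ m • a}) := by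
  intro hinj
  have hQ : 1 < q ^ n := Nat.one_lt_pow hn hq
  refine ((infinite_setOf_pow_nsmul ha hq).mono subset_closure).not_finite <|
    isClosed_closure.isCompact.finite_of_injOn_of_expanding (continuous_const_smul _).continuousOn
      (mapsTo_nsmul_closure_setOf_pow_nsmul a q n) hinj (c := (q ^ n : ℕ)) (Nat.one_lt_cast.2 hQ)
      (δ := 1 / (2 * (q ^ n : ℕ))) (by positivity) fun u _ v _ huv => ?_
  rw [lt_div_iff₀ (by positivity)] at huv
  rw [AddCircle.dist_nsmul_eq_mul_dist one_ne_zero (by rw [abs_one]; linarith)]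

/-- For an irrational `x`, the difference set of the closure `𝒪` of the
`T_q`-forward orbit of `x` in `ℝ/ℤ` contains, for every `n ≥ 1`, a rational
point `ℓₙ / qⁿ` with `ℓₙ ∈ {1, …, qⁿ - 1}`. -/
theorem rational_points_in_difference_of_orbit_closure
    (q : ℕ) (hq : 2 ≤ q) (x : ℝ) (hx : Irrational x) :
    ∀ n : ℕ, 1 ≤ n → ∃ ℓ : ℕ, 1 ≤ ℓ ∧ ℓ ≤ q ^ n - 1 ∧
      ((((ℓ : ℝ) / (q : ℝ) ^ n : ℝ) : UnitAddCircle) ∈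
        closure {y : UnitAddCircle | ∃ m : ℕ, y = q ^ m • (x : UnitAddCircle)} -
        closure {y : UnitAddCircle | ∃ m : ℕ, y = q ^ m • (x : UnitAddCircle)}) := by
  intro n hn
  have hnotinj := not_injOn_nsmul_closure_setOf_pow_nsmul hx.not_isOfFinAddOrder_coe hq
    (Nat.one_le_iff_ne_zero.1 hn)
  simp only [InjOn, not_forall] at hnotinj
  obtain ⟨a, ha, b, hb, hab, hne⟩ := hnotinj
  obtain ⟨ℓ, hℓ, hℓN, hℓab⟩ :=
    AddCircle.exists_nat_div_eq_sub_of_nsmul_eq (pow_pos (by omega) n) hab hne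
  refine ⟨ℓ, hℓ, by omega, ?_⟩
  rw [← Nat.cast_pow, ← mul_one ((ℓ : ℝ) / _), hℓab]
  exact sub_mem_sub ha hb
end

section
/- Let q ≥ 2 be an integer, x irrational, and 𝒪 the closure of the T_q-orbit of x in ℝ/ℤ. Then the sequence ℓ_n from the difference-set construction can be chosen so that gcd(ℓ_n, q) = gcd(ℓ_1, q) for all n; in particular if q is prime, gcd(ℓ_n, q) = 1 for all n. -/
/-!
Let `T = (q • ·)` and let `W = ⋂ₙ Tⁿ(𝒪)` be the eventual image of the orbit closure; it is
compact and `T W = W`. It is infinite: otherwise the orbit of `x`, which accumulates on `W`,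
would be trapped near the finitely many points of `W`, from which `T` repels (it multiplies
small distances by `q`); so it would land in `W`, forcing `x` to be rational. A locally
expanding continuous bijection of a compact metric space forces the space to be finite, so
`T` identifies two points `u ≠ v` of `W`. Pulling `(u, v)` back along `T` inside `W` gives
differences `dₙ ∈ 𝒪 - 𝒪` with `q • dₙ₊₁ = dₙ` and `qⁿ • dₙ = 0`, i.e. `dₙ = ℓₙ/qⁿ`, and
compatibility means `ℓₙ₊₁ ≡ ℓₙ mod qⁿ`, so `gcd(ℓₙ, q)` is constant.
-/

open Set Function Filter Metric Pointwise

section EventualImage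

variable {X : Type*} {f : X → X} {S : Set X}

def eventualImage (f : X → X) (S : Set X) : Set X := ⋂ n, f^[n] '' S

theorem eventualImage_subset : eventualImage f S ⊆ S :=
  (iInter_subset _ 0).trans (image_id S).subset

theorem Set.MapsTo.antitone_iterate_image (hfS : MapsTo f S S) : Antitone fun n => f^[n] '' S :=
  antitone_nat_of_succ_le fun n => by
    rw [iterate_succ, image_comp]
    exact image_mono hfS.image_subset

variable [TopologicalSpace X] [T2Space X]

theorem isCompact_eventualImage (hf : Continuous f) (hS : IsCompact S) :
    IsCompact (eventualImage f S) :=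
  hS.of_isClosed_subset (isClosed_iInter fun n => (hS.image (hf.iterate n)).isClosed)
    eventualImage_subset

theorem image_eventualImage (hf : Continuous f) (hS : IsCompact S) (hfS : MapsTo f S S) :
    f '' eventualImage f S = eventualImage f S := by
  have hanti := hfS.antitone_iterate_image
  refine (image_iInter_subset _ _).trans (fun w hw => ?_) |>.antisymm fun w hw => ?_
  · refine mem_iInter.2 fun n => hanti n.le_succ ?_
    show w ∈ f^[n + 1] '' S
    rw [iterate_succ', image_comp]
    exact mem_iInter.1 hw n
  · have hpre (n : ℕ) : (f^[n] '' S ∩ f ⁻¹' {w}).Nonempty := by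
      obtain ⟨v, hv, rfl⟩ : w ∈ f '' (f^[n] '' S) := by
        rw [← image_comp, ← iterate_succ']
        exact mem_iInter.1 hw (n + 1)
      exact ⟨v, hv, rfl⟩
    obtain ⟨v, hv⟩ := IsCompact.nonempty_iInter_of_sequence_nonempty_isCompact_isClosed _
      (fun n => inter_subset_inter_left _ (hanti n.le_succ)) hpre
      ((hS.image (hf.iterate 0)).inter_right (isClosed_singleton.preimage hf))
      (fun n => (hS.image (hf.iterate n)).isClosed.inter (isClosed_singleton.preimage hf))
    exact ⟨v, mem_iInter.2 fun n => (mem_iInter.1 hv n).1, (mem_iInter.1 hv 0).2⟩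

theorem eventually_iterate_mem_of_eventualImage_subset (hf : Continuous f) (hS : IsCompact S)
    (hfS : MapsTo f S S) {U : Set X} (hU : IsOpen U) (hWU : eventualImage f S ⊆ U) {y : X}
    (hy : y ∈ S) : ∀ᶠ k in atTop, f^[k] y ∈ U := by
  obtain ⟨J, hJ⟩ := exists_subset_nhds_of_isCompact' hfS.antitone_iterate_image.directed_ge
    (fun n => hS.image (hf.iterate n)) (fun n => (hS.image (hf.iterate n)).isClosed)
    fun w hw => hU.mem_nhds (hWU hw)
  refine eventually_atTop.2 ⟨J, fun k hk => hJ ⟨f^[k - J] y, hfS.iterate _ hy, ?_⟩⟩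
  rw [← iterate_add_apply, Nat.add_sub_cancel' hk]

end EventualImage

section Expanding

variable {X : Type*} [MetricSpace X]

theorem Set.Finite.exists_pos_le_dist {s : Set X} (hs : s.Finite) :
    ∃ ρ > 0, ∀ x ∈ s, ∀ y ∈ s, x ≠ y → ρ ≤ dist x y := by
  by_cases h : s.Nontrivial
  · exact ⟨s.infsep, hs.infsep_pos_iff_nontrivial.2 h,
      fun x hx y hy hxy => infsep_le_dist_of_mem hx hy hxy⟩
  · exact ⟨1, one_pos, fun x hx y hy hxy => absurd ⟨x, hx, y, hy, hxy⟩ h⟩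

theorem finite_of_forall_exists_finset_card_le {N : ℕ}
    (h : ∀ ε > 0, ∃ t : Finset X, t.card ≤ N ∧ ∀ w, ∃ e ∈ t, dist w e < ε) : Finite X := by
  by_contra hfin
  have : Infinite X := not_finite_iff_infinite.1 hfin
  obtain ⟨A, hA⟩ := Infinite.exists_subset_card_eq X (N + 1)
  obtain ⟨ρ, hρ, hsep⟩ := A.finite_toSet.exists_pos_le_dist
  obtain ⟨t, ht, hcov⟩ := h (ρ / 2) (by positivity)
  choose e he hwe using hcov
  obtain ⟨a, ha, b, hb, hab, heq⟩ :=
    Finset.exists_ne_map_eq_of_card_lt_of_maps_to (by omega) fun a (_ : a ∈ A) => he a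
  have hb' := hwe b
  rw [← heq] at hb'
  linarith [hsep a ha b hb hab, hwe a, dist_triangle_right a b (e a)]

theorem finite_of_bijective_of_expanding [CompactSpace X] {f : X → X} (hf : Continuous f)
    (hbij : Bijective f) {K c : ℝ} (hK : 1 < K) (hc : 0 < c)
    (hexp : ∀ a b, dist a b ≤ c → K * dist a b ≤ dist (f a) (f b)) : Finite X := by
  classical
  let g := (hf.homeoOfEquivCompactToT2 (f := Equiv.ofBijective f hbij)).symm
  have hfg (a : X) : f (g a) = a := (Equiv.ofBijective f hbij).apply_symm_apply a
  have hgf (a : X) : g (f a) = a := (Equiv.ofBijective f hbij).symm_apply_apply a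
  obtain ⟨δ, hδ, hgδ⟩ := Metric.uniformContinuous_iff.1
    (CompactSpace.uniformContinuous_of_continuous g.continuous) c hc
  have contract (n : ℕ) : ∀ a b, dist a b < δ → K ^ n * dist (g^[n] a) (g^[n] b) ≤ dist a b := by
    induction n with
    | zero => simp
    | succ n ih =>
      intro a b hab
      have hK' : K * dist (g a) (g b) ≤ dist a b := by
        simpa only [hfg] using hexp _ _ (hgδ hab).le
      have hgab : dist (g a) (g b) < δ := by nlinarith [dist_nonneg (x := g a) (y := g b)]
      calc K ^ (n + 1) * dist (g^[n + 1] a) (g^[n + 1] b)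
          = K * (K ^ n * dist (g^[n] (g a)) (g^[n] (g b))) := by
            rw [iterate_succ_apply, iterate_succ_apply, pow_succ]; ring
        _ ≤ K * dist (g a) (g b) := by gcongr; exact ih _ _ hgab
        _ ≤ dist a b := hK'
  obtain ⟨t, -, ht, hcover⟩ := (isCompact_univ (X := X)).finite_cover_balls hδ
  refine finite_of_forall_exists_finset_card_le (N := ht.toFinset.card) fun ε hε => ?_
  obtain ⟨n, hn⟩ := pow_unbounded_of_one_lt (δ / ε) hK
  refine ⟨ht.toFinset.image g^[n], Finset.card_image_le, fun w => ?_⟩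
  obtain ⟨e, he, hwe⟩ := mem_iUnion₂.1 (hcover (mem_univ (f^[n] w)))
  refine ⟨g^[n] e, Finset.mem_image_of_mem _ (ht.mem_toFinset.2 he), ?_⟩
  have hclose := contract n _ _ (mem_ball.1 hwe)
  rw [LeftInverse.iterate hgf n w] at hclose
  have hδε := (div_lt_iff₀ hε).1 hn
  exact lt_of_mul_lt_mul_left (by linarith [mem_ball.1 hwe]) (by positivity : (0 : ℝ) ≤ K ^ n)

theorem Set.Finite.exists_iterate_mem_of_eventually_mem_thickening {f : X → X} {K c : ℝ}
    (hK : 1 < K) (hc : 0 < c) (hf : ∀ a b, dist a b ≤ c → dist (f a) (f b) = K * dist a b)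
    {W : Set X} (hW : W.Finite) (hfW : MapsTo f W W) {y : X}
    (hy : ∀ ε > 0, ∀ᶠ k in atTop, f^[k] y ∈ thickening ε W) : ∃ k, f^[k] y ∈ W := by
  obtain ⟨ρ, hρ, hsep⟩ := hW.exists_pos_le_dist
  set ε := min c (ρ / (K + 1))
  have hε : 0 < ε := lt_min hc (by positivity)
  have hερ : ε * (K + 1) ≤ ρ := (le_div_iff₀ (by linarith)).1 (min_le_right _ _)
  obtain ⟨J, hJ⟩ := eventually_atTop.1 (hy ε hε)
  obtain ⟨p, hp, hpJ⟩ := mem_thickening_iff.1 (hJ J le_rfl)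
  -- the orbit of `y` shadows that of `p`: it cannot jump to another point of `W`, which is
  -- `ρ`-separated, so the distance is multiplied by `K` at each step while staying below `ε`
  have shadow (j : ℕ) : dist (f^[J + j] y) (f^[j] p) = K ^ j * dist (f^[J] y) p ∧
      dist (f^[J + j] y) (f^[j] p) < ε := by
    induction j with
    | zero => simpa using hpJ
    | succ j ih =>
      have hstep : dist (f^[J + (j + 1)] y) (f^[j + 1] p) = K * dist (f^[J + j] y) (f^[j] p) := by
        rw [← add_assoc, iterate_succ_apply', iterate_succ_apply']
        exact hf _ _ (ih.2.le.trans (min_le_left _ _))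
      refine ⟨by rw [hstep, ih.1, pow_succ]; ring, ?_⟩
      obtain ⟨p', hp', hp'ε⟩ := mem_thickening_iff.1 (hJ (J + (j + 1)) (by omega))
      obtain rfl | hne := eq_or_ne p' (f^[j + 1] p)
      · exact hp'ε
      · have := hsep _ hp' _ (hfW.iterate (j + 1) hp) hne
        have := dist_triangle_left p' (f^[j + 1] p) (f^[J + (j + 1)] y)
        nlinarith [ih.2]
  have hzero : dist (f^[J] y) p = 0 := by
    by_contra hne
    have hpos := dist_nonneg.lt_of_ne' hne
    obtain ⟨j, hj⟩ := pow_unbounded_of_one_lt (ε / dist (f^[J] y) p) hK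
    have := (div_lt_iff₀ hpos).1 hj
    have := shadow j
    linarith [this.1 ▸ this.2]
  exact ⟨J, dist_eq_zero.1 hzero ▸ hp⟩

end Expanding

theorem exists_nsmul_chain_of_nsmul_eq {G : Type*} [AddCommGroup G] {q : ℕ} {W : Set G}
    (hW : SurjOn (q • ·) W W) {u v : G} (hu : u ∈ W) (hv : v ∈ W) (huv : u ≠ v)
    (h : q • u = q • v) :
    ∃ d : ℕ → G, (∀ n, d n ∈ W - W) ∧ (∀ n, q • d (n + 1) = d n) ∧
      (∀ n, q ^ n • d n = 0) ∧ ∀ n, 1 ≤ n → d n ≠ 0 := by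
  set g := invFunOn (q • ·) W
  have hgW : ∀ n, MapsTo g^[n] W W := fun n => hW.mapsTo_invFunOn.iterate n
  have hqg : ∀ w ∈ W, q • g w = w := fun w hw => hW.rightInvOn_invFunOn hw
  let d : ℕ → G
    | 0 => 0
    | n + 1 => g^[n] u - g^[n] v
  have hstep : ∀ n, q • d (n + 1) = d n := by
    rintro (_ | n)
    · simp [d, smul_sub, h]
    · simp only [d, iterate_succ_apply', smul_sub, hqg _ (hgW n hu), hqg _ (hgW n hv)]
  refine ⟨d, ?_, hstep, ?_, ?_⟩
  · rintro (_ | n)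
    · simpa [d] using sub_mem_sub hu hu
    · exact sub_mem_sub (hgW n hu) (hgW n hv)
  · intro n
    induction n with
    | zero => simp [d]
    | succ n ih => rw [pow_succ, mul_smul, hstep, ih]
  · intro n hn
    induction n, hn using Nat.le_induction with
    | base => simpa [d] using sub_ne_zero.2 huv
    | succ n _ ih => exact fun h0 => ih (by rw [← hstep, h0, smul_zero])

namespace UnitAddCircle

theorem dist_nsmul_nsmul {n : ℕ} {a b : UnitAddCircle} (h : n * dist a b ≤ 1 / 2) :
    dist (n • a) (n • b) = n * dist a b := by
  rw [dist_eq_norm, dist_eq_norm, ← smul_sub] at *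
  generalize a - b = u at *
  obtain ⟨r, hr, rfl⟩ : ∃ r ∈ Ioc (-(1 / 2) : ℝ) (-(1 / 2) + 1), (r : UnitAddCircle) = u :=
    ⟨_, (AddCircle.equivIoc 1 (-(1 / 2)) u).2, (AddCircle.equivIoc 1 _).symm_apply_apply u⟩
  have hnorm {s : ℝ} (hs : |s| ≤ 1 / 2) : ‖(s : UnitAddCircle)‖ = |s| :=
    (AddCircle.norm_coe_eq_abs_iff 1 one_ne_zero).2 (by simpa using hs)
  have hr' : |r| ≤ 1 / 2 := abs_le.2 ⟨hr.1.le, by linarith [hr.2]⟩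
  rw [hnorm hr'] at h
  rw [← AddCircle.coe_nsmul, nsmul_eq_mul, hnorm (by rwa [abs_mul, Nat.abs_cast]), hnorm hr',
    abs_mul, Nat.abs_cast]

theorem injective_pow_nsmul_coe {q : ℕ} (hq : 2 ≤ q) {x : ℝ} (hx : Irrational x) :
    Injective fun n : ℕ => q ^ n • (x : UnitAddCircle) := by
  have : ¬IsOfFinAddOrder (x : UnitAddCircle) :=
    AddCircle.not_isOfFinAddOrder_iff_forall_rat_ne_div.2 fun r hr => hx ⟨r, by simpa using hr⟩
  exact (injective_nsmul_iff_not_isOfFinAddOrder.2 this).comp (Nat.pow_right_injective hq)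

theorem natCast_modEq_of_coe_div_eq {a b M : ℕ} (hM : 0 < M)
    (h : ((a / M : ℝ) : UnitAddCircle) = ((b / M : ℝ) : UnitAddCircle)) : a ≡ b [MOD M] := by
  rw [← sub_eq_zero, ← AddCircle.coe_sub, AddCircle.coe_eq_zero_iff] at h
  obtain ⟨k, hk⟩ := h
  refine Nat.modEq_iff_dvd.2 ⟨-k, ?_⟩
  have hM' : (M : ℝ) ≠ 0 := by positivity
  rw [zsmul_one, div_sub_div_same, eq_div_iff hM'] at hk
  exact_mod_cast (by linarith : ((b : ℝ) - a) = M * -k)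

theorem nsmul_coe_div_pow_succ {q : ℕ} (hq : q ≠ 0) (a : ℝ) (n : ℕ) :
    q • ((a / (q : ℝ) ^ (n + 1) : ℝ) : UnitAddCircle) = ((a / (q : ℝ) ^ n : ℝ) : UnitAddCircle) := by
  rw [← AddCircle.coe_nsmul, nsmul_eq_mul, pow_succ]
  congr 1
  field_simp

end UnitAddCircle

theorem gcd_eq_gcd_one_of_compatible {q : ℕ} (hq : q ≠ 0) {ℓ : ℕ → ℕ}
    (hcompat : ∀ n : ℕ, 1 ≤ n →
      q • (((ℓ (n + 1) : ℝ) / (q : ℝ) ^ (n + 1) : ℝ) : UnitAddCircle) =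
        (((ℓ n : ℝ) / (q : ℝ) ^ n : ℝ) : UnitAddCircle)) :
    ∀ n : ℕ, 1 ≤ n → Nat.gcd (ℓ n) q = Nat.gcd (ℓ 1) q := by
  intro n hn
  induction n, hn using Nat.le_induction with
  | base => rfl
  | succ n hn ih =>
    have h := hcompat n hn
    rw [UnitAddCircle.nsmul_coe_div_pow_succ hq] at h
    have hmod := UnitAddCircle.natCast_modEq_of_coe_div_eq (M := q ^ n) (by positivity)
      (by push_cast; exact h)
    rw [← ih, (hmod.of_dvd (dvd_pow_self q (by omega))).gcd_eq]

theorem exists_nsmul_chain_in_orbit_closure_sub {q : ℕ} (hq : 2 ≤ q) {x : ℝ}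
    (hx : Irrational x) :
    ∃ d : ℕ → UnitAddCircle,
      (∀ n, d n ∈ closure {y : UnitAddCircle | ∃ m : ℕ, y = q ^ m • (x : UnitAddCircle)} -
        closure {y : UnitAddCircle | ∃ m : ℕ, y = q ^ m • (x : UnitAddCircle)}) ∧
      (∀ n, q • d (n + 1) = d n) ∧ (∀ n, q ^ n • d n = 0) ∧ ∀ n, 1 ≤ n → d n ≠ 0 := by
  set T : UnitAddCircle → UnitAddCircle := (q • ·)
  set S := closure {y : UnitAddCircle | ∃ m : ℕ, y = q ^ m • (x : UnitAddCircle)}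
  have hq1 : (1 : ℝ) < q := by exact_mod_cast hq
  have hT : Continuous T := continuous_const_smul q
  have hTdist (a b : UnitAddCircle) (h : dist a b ≤ 1 / (2 * q)) :
      dist (T a) (T b) = q * dist a b :=
    UnitAddCircle.dist_nsmul_nsmul (by rw [le_div_iff₀ (by positivity)] at h; linarith)
  have hTS : MapsTo T S S :=
    MapsTo.closure (fun y ⟨m, hm⟩ => ⟨m + 1, by rw [hm, pow_succ', mul_smul]⟩) hT
  have hSc : IsCompact S := isClosed_closure.isCompact
  set W := eventualImage T S
  have hTW : T '' W = W := image_eventualImage hT hSc hTS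
  have hTWW : MapsTo T W W := mapsTo_iff_image_subset.2 hTW.subset
  have hWinf : W.Infinite := by
    intro hWfin
    obtain ⟨k, hk⟩ := hWfin.exists_iterate_mem_of_eventually_mem_thickening
      (y := (x : UnitAddCircle)) hq1 (by positivity) hTdist hTWW fun ε hε =>
        eventually_iterate_mem_of_eventualImage_subset hT hSc hTS isOpen_thickening
          (self_subset_thickening hε W) (subset_closure ⟨0, by simp⟩)
    refine hWfin.not_infinite (infinite_of_injective_forall_mem
      ((UnitAddCircle.injective_pow_nsmul_coe hq hx).comp (add_right_injective k)) fun m => ?_)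
    have := hTWW.iterate m hk
    rw [← iterate_add_apply, smul_iterate, add_comm] at this
    exact this
  obtain ⟨u, hu, v, hv, huv, hquv⟩ : ∃ u ∈ W, ∃ v ∈ W, u ≠ v ∧ q • u = q • v := by
    by_contra! hinj
    have hinjT : InjOn T W := fun u hu v hv h => by_contra fun hne => hinj u hu v hv hne h
    have hbij : BijOn T W W := ⟨hTWW, hinjT, hTW.symm.subset⟩
    have : CompactSpace W := isCompact_iff_compactSpace.1 (isCompact_eventualImage hT hSc)
    exact hWinf (finite_coe_iff.1 (finite_of_bijective_of_expanding (hT.restrict hbij.mapsTo)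
      hbij.bijective hq1 (c := 1 / (2 * q)) (by positivity) fun a b h => (hTdist a b h).ge))
  obtain ⟨d, hdW, hd⟩ := exists_nsmul_chain_of_nsmul_eq hTW.symm.subset hu hv huv hquv
  exact ⟨d, fun n => sub_subset_sub eventualImage_subset eventualImage_subset (hdW n), hd⟩

/-- The rational points `ℓₙ/qⁿ` in the difference set of the orbit closure can be
chosen compatibly (`q · (ℓ_{n+1}/q^{n+1}) ≡ ℓₙ/qⁿ mod 1`), and then `gcd(ℓₙ, q)`
is independent of `n`; in particular if `q` is prime, `gcd(ℓₙ, q) = 1`. -/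
theorem gcd_of_compatible_rational_points
    (q : ℕ) (hq : 2 ≤ q) (x : ℝ) (hx : Irrational x) :
    ∃ ℓ : ℕ → ℕ,
      (∀ n : ℕ, 1 ≤ n → 1 ≤ ℓ n ∧ ℓ n ≤ q ^ n - 1) ∧
      (∀ n : ℕ, 1 ≤ n →
        ((((ℓ n : ℝ) / (q : ℝ) ^ n : ℝ) : UnitAddCircle) ∈
          closure {y : UnitAddCircle | ∃ m : ℕ, y = q ^ m • (x : UnitAddCircle)} -
          closure {y : UnitAddCircle | ∃ m : ℕ, y = q ^ m • (x : UnitAddCircle)})) ∧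
      (∀ n : ℕ, 1 ≤ n →
        (q • (((ℓ (n + 1) : ℝ) / (q : ℝ) ^ (n + 1) : ℝ) : UnitAddCircle) =
          (((ℓ n : ℝ) / (q : ℝ) ^ n : ℝ) : UnitAddCircle))) ∧
      (∀ n : ℕ, 1 ≤ n → Nat.gcd (ℓ n) q = Nat.gcd (ℓ 1) q) ∧
      (Nat.Prime q → ∀ n : ℕ, 1 ≤ n → Nat.gcd (ℓ n) q = 1) := by
  obtain ⟨d, hdS, hdq, htors, hne⟩ := exists_nsmul_chain_in_orbit_closure_sub hq hx
  choose ℓ hℓlt hℓ using fun n =>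
    (AddCircle.nsmul_eq_zero_iff (p := (1 : ℝ)) (pow_pos (by omega : 0 < q) n)).1 (htors n)
  have hℓd (n : ℕ) : (((ℓ n : ℝ) / (q : ℝ) ^ n : ℝ) : UnitAddCircle) = d n := by
    rw [← hℓ n]
    push_cast
    ring_nf
  have hcompat (n : ℕ) (_ : 1 ≤ n) : q • (((ℓ (n + 1) : ℝ) / (q : ℝ) ^ (n + 1) : ℝ) :
      UnitAddCircle) = (((ℓ n : ℝ) / (q : ℝ) ^ n : ℝ) : UnitAddCircle) := by
    rw [hℓd, hℓd, hdq]
  have hℓpos (n : ℕ) (hn : 1 ≤ n) : 1 ≤ ℓ n :=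
    Nat.one_le_iff_ne_zero.2 fun h0 => hne n hn (by rw [← hℓd, h0]; simp)
  have hgcd := gcd_eq_gcd_one_of_compatible (by omega) hcompat
  refine ⟨ℓ, fun n hn => ⟨hℓpos n hn, Nat.le_sub_one_of_lt (hℓlt n)⟩, fun n _ => hℓd n ▸ hdS n,
    hcompat, hgcd, fun hp n hn => ?_⟩
  rw [hgcd n hn, Nat.gcd_comm]
  exact hp.coprime_iff_not_dvd.2 (Nat.not_dvd_of_pos_of_lt (hℓpos 1 le_rfl) (by simpa using hℓlt 1))
end

section
/- Let q ≥ 2 be an integer, x irrational, 𝒪 the closure of the T_q-orbit of x in ℝ/ℤ, and 𝒪' = ⋂_{i≥0} T_q^i 𝒪 its attractor. Then the restriction of T_q to 𝒪' is not injective. -/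
/-!
Suppose `T = (q • ·)` is injective on the attractor `K`. By compactness `T K = K`, so `T` is a
homeomorphism of `K`; its inverse is uniformly continuous and, since `T` multiplies distances
below `1 / (2q)` by `q`, it multiplies small distances by `q⁻¹`. A compact metric space carrying a
surjective local contraction is finite (Schwartzman): it is covered by a fixed number of sets of
arbitrarily small diameter, namely the images of a fixed cover by small balls under high iterates.
So `K` is finite and invariant. The orbit of `x` accumulates on `K`, yet never meets it, because
its points are pairwise distinct (`x` is irrational). But near a finite invariant set `T`
multiplies the distance to the set by `q`, so this distance cannot tend to `0`.
-/

open Function Metric Set Filter Topology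

def attractor {X : Type*} (f : X → X) (s : Set X) : Set X := ⋂ i, f^[i] '' s

section Attractor

variable {X : Type*} {f : X → X} {O : Set X}

lemma iterate_image_antitone (hOf : MapsTo f O O) : Antitone fun i => f^[i] '' O :=
  antitone_nat_of_succ_le fun i => by
    rw [iterate_succ, image_comp]
    exact image_mono hOf.image_subset

lemma mapsTo_attractor (hOf : MapsTo f O O) : MapsTo f (attractor f O) (attractor f O) := by
  intro z hz
  refine mem_iInter.2 fun i => iterate_image_antitone hOf i.le_succ ?_
  show f z ∈ f^[i + 1] '' O
  rw [iterate_succ', image_comp]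
  exact mem_image_of_mem f (mem_iInter.1 hz i)

lemma iterate_notMem_of_injective {K : Set X} (hK : K.Finite) (hKf : MapsTo f K K) {z : X}
    (hz : Injective fun n => f^[n] z) (n : ℕ) : f^[n] z ∉ K := fun hn =>
  infinite_of_injective_forall_mem (hz.comp (add_left_injective n))
    (fun m => by simpa only [comp_apply, iterate_add_apply] using hKf.iterate m hn) hK

variable [TopologicalSpace X]

lemma isCompact_iterate_image (hf : Continuous f) (hO : IsCompact O) (i : ℕ) :
    IsCompact (f^[i] '' O) :=
  hO.image (hf.iterate i)

variable [T2Space X]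

lemma isCompact_attractor (hf : Continuous f) (hO : IsCompact O) : IsCompact (attractor f O) :=
  hO.of_isClosed_subset (isClosed_iInter fun i => (isCompact_iterate_image hf hO i).isClosed)
    (iInter_subset_of_subset 0 (by simp))

lemma attractor_nonempty (hf : Continuous f) (hO : IsCompact O) (hOf : MapsTo f O O)
    (hOne : O.Nonempty) : (attractor f O).Nonempty :=
  IsCompact.nonempty_iInter_of_sequence_nonempty_isCompact_isClosed _
    (fun i => iterate_image_antitone hOf i.le_succ) (fun _ => hOne.image _)
    (isCompact_iterate_image hf hO 0) fun i => (isCompact_iterate_image hf hO i).isClosed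

lemma surjOn_attractor (hf : Continuous f) (hO : IsCompact O) (hOf : MapsTo f O O) :
    SurjOn f (attractor f O) (attractor f O) := by
  intro z hz
  have hfib : ∀ i, (f^[i] '' O ∩ f ⁻¹' {z}).Nonempty := fun i => by
    obtain ⟨w, hw, rfl⟩ : z ∈ f '' (f^[i] '' O) := by
      rw [← image_comp, ← iterate_succ']
      exact mem_iInter.1 hz (i + 1)
    exact ⟨w, hw, rfl⟩
  obtain ⟨w, hw⟩ := IsCompact.nonempty_iInter_of_sequence_nonempty_isCompact_isClosed _
    (fun i => inter_subset_inter_left _ (iterate_image_antitone hOf i.le_succ)) hfib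
    ((isCompact_iterate_image hf hO 0).inter_right (isClosed_singleton.preimage hf))
    fun i => (isCompact_iterate_image hf hO i).isClosed.inter (isClosed_singleton.preimage hf)
  exact ⟨w, mem_iInter.2 fun i => (mem_iInter.1 hw i).1, (mem_iInter.1 hw 0).2⟩

end Attractor

section Metric

variable {X : Type*} [MetricSpace X] {f : X → X}

lemma tendsto_infDist_iterate_attractor {O : Set X} (hf : Continuous f) (hO : IsCompact O)
    (hOf : MapsTo f O O) {z : X} (hz : z ∈ O) :
    Tendsto (fun n => infDist (f^[n] z) (attractor f O)) atTop (𝓝 0) := by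
  refine tendsto_order.2 ⟨fun a ha => .of_forall fun n => ha.trans_le infDist_nonneg,
    fun ε hε => ?_⟩
  obtain ⟨i, hi⟩ := exists_subset_nhds_of_isCompact (iterate_image_antitone hOf).directed_ge
    (isCompact_iterate_image hf hO) (U := {y | infDist y (attractor f O) < ε}) fun y hy =>
      (isOpen_lt (continuous_infDist_pt _) continuous_const).mem_nhds
        (show infDist y _ < ε by rwa [infDist_zero_of_mem (s := attractor f O) hy])
  refine eventually_atTop.2 ⟨i, fun n hn => hi ?_⟩
  obtain ⟨k, rfl⟩ := Nat.exists_eq_add_of_le hn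
  rw [iterate_add_apply]
  exact mem_image_of_mem _ (hOf.iterate _ hz)

lemma Set.Finite.exists_pos_pairwise_le_dist {s : Set X} (hs : s.Finite) :
    ∃ r > 0, s.Pairwise fun x y => r ≤ dist x y := by
  have hsep : ∀ᶠ r in 𝓝[>] (0 : ℝ), ∀ p ∈ s.offDiag, r ≤ dist p.1 p.2 :=
    hs.offDiag.eventually_all.2 fun p hp =>
      nhdsWithin_le_nhds (eventually_le_nhds (dist_pos.2 hp.2.2))
  obtain ⟨r, hr, hr0⟩ := (hsep.and self_mem_nhdsWithin).exists
  exact ⟨r, hr0, fun x hx y hy hxy => hr (x, y) ⟨hx, hy, hxy⟩⟩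

lemma dist_iterate_le_of_locally_contracting {δ c : ℝ} (hc0 : 0 ≤ c) (hc1 : c ≤ 1)
    (hf : ∀ a b, dist a b < δ → dist (f a) (f b) ≤ c * dist a b) (n : ℕ) {a b : X}
    (hab : dist a b < δ) : dist (f^[n] a) (f^[n] b) ≤ c ^ n * dist a b := by
  induction n generalizing a b with
  | zero => simp
  | succ n ih =>
    have h1 := hf a b hab
    have h2 : dist (f a) (f b) < δ :=
      h1.trans_lt (lt_of_le_of_lt (mul_le_of_le_one_left dist_nonneg hc1) hab)
    calc dist (f^[n + 1] a) (f^[n + 1] b) ≤ c ^ n * dist (f a) (f b) := ih h2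
      _ ≤ c ^ n * (c * dist a b) := mul_le_mul_of_nonneg_left h1 (pow_nonneg hc0 n)
      _ = c ^ (n + 1) * dist a b := by ring

lemma finite_of_surjective_locally_contracting [CompactSpace X] (hsurj : Surjective f)
    {δ c : ℝ} (hδ : 0 < δ) (hc0 : 0 ≤ c) (hc1 : c < 1)
    (hf : ∀ a b, dist a b < δ → dist (f a) (f b) ≤ c * dist a b) : Finite X := by
  obtain ⟨t, -, ht, hcover⟩ := finite_cover_balls_of_compact (isCompact_univ (X := X)) (half_pos hδ)
  by_contra hfin
  rw [not_finite_iff_infinite] at hfin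
  obtain ⟨s, hs⟩ := Infinite.exists_subset_card_eq X (ht.toFinset.card + 1)
  obtain ⟨η, hη, hsep⟩ := (s : Set X).toFinite.exists_pos_pairwise_le_dist
  obtain ⟨n, hn⟩ := exists_pow_lt_of_lt_one (div_pos hη hδ) hc1
  have hpre : ∀ z, ∃ j ∈ t, ∃ a ∈ ball j (δ / 2), f^[n] a = z := fun z => by
    obtain ⟨a, rfl⟩ := (hsurj.iterate n) z
    obtain ⟨j, hj, ha⟩ := mem_iUnion₂.1 (hcover (mem_univ a))
    exact ⟨j, hj, a, ha, rfl⟩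
  choose j hj a ha hfa using hpre
  have hinj : InjOn j s := fun z hz w hw hjzw => by
    by_contra hzw
    have haz := mem_ball.1 (ha z)
    have haw := mem_ball.1 (ha w)
    rw [hjzw] at haz
    have hclose : dist (a z) (a w) < δ := by linarith [dist_triangle_right (a z) (a w) (j w)]
    have hzw_le := dist_iterate_le_of_locally_contracting hc0 hc1.le hf n hclose
    rw [hfa, hfa] at hzw_le
    have : c ^ n * δ < η := (lt_div_iff₀ hδ).1 hn
    linarith [hsep hz hw hzw, mul_le_mul_of_nonneg_left hclose.le (pow_nonneg hc0 n)]
  have := Finset.card_le_card_of_injOn j (fun z _ => ht.mem_toFinset.2 (hj z)) hinj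
  omega

lemma finite_of_bijective_locally_expanding [CompactSpace X] (hf : Continuous f)
    (hbij : Bijective f) {ε c : ℝ} (hε : 0 < ε) (hc : 1 < c)
    (hexp : ∀ a b, dist a b ≤ ε → dist (f a) (f b) = c * dist a b) : Finite X := by
  let e : X ≃ₜ X := (show Continuous (Equiv.ofBijective f hbij) from hf).homeoOfEquivCompactToT2
  obtain ⟨δ, hδ, he⟩ := Metric.uniformContinuous_iff.1
    (CompactSpace.uniformContinuous_of_continuous e.symm.continuous) ε hε
  have hc0 : 0 < c := one_pos.trans hc
  refine finite_of_surjective_locally_contracting e.symm.surjective hδ (inv_nonneg.2 hc0.le)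
    (inv_lt_one_of_one_lt₀ hc) fun a b hab => ?_
  have h := hexp _ _ (he hab).le
  rw [show f (e.symm a) = a from e.apply_symm_apply a,
    show f (e.symm b) = b from e.apply_symm_apply b] at h
  rw [h, inv_mul_cancel_left₀ hc0.ne']

lemma attractor_finite_of_injOn {O : Set X} (hf : Continuous f) (hO : IsCompact O)
    (hOf : MapsTo f O O) (hinj : InjOn f (attractor f O)) {ε c : ℝ} (hε : 0 < ε) (hc : 1 < c)
    (hexp : ∀ a b, dist a b ≤ ε → dist (f a) (f b) = c * dist a b) :
    (attractor f O).Finite := by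
  have hbij : BijOn f (attractor f O) (attractor f O) :=
    ⟨mapsTo_attractor hOf, hinj, surjOn_attractor hf hO hOf⟩
  have := isCompact_iff_compactSpace.1 (isCompact_attractor hf hO)
  exact finite_coe_iff.1 <| finite_of_bijective_locally_expanding
    (hf.restrict hbij.mapsTo) hbij.bijective hε hc fun a b => hexp a b

lemma mul_infDist_le_infDist_image {K : Set X} (hK : K.Finite) (hKne : K.Nonempty)
    (hKf : MapsTo f K K) {r ε c : ℝ} (hr : K.Pairwise fun a b => r ≤ dist a b)
    (hexp : ∀ a b, dist a b ≤ ε → dist (f a) (f b) = c * dist a b) {z : X}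
    (hzε : infDist z K ≤ ε) (hzr : 2 * c * infDist z K < r) :
    c * infDist z K ≤ infDist (f z) K := by
  obtain ⟨y, hy, hzy⟩ := hK.isCompact.exists_infDist_eq_dist hKne z
  have hfzy : dist (f z) (f y) = c * infDist z K := by
    rw [hzy]
    exact hexp z y (hzy ▸ hzε)
  refine (le_infDist hKne).2 fun w hw => ?_
  by_cases hwy : w = f y
  · rw [hwy, hfzy]
  · linarith [hr hw (hKf hy) hwy, dist_triangle_left w (f y) (f z)]

lemma not_tendsto_infDist_iterate_of_finite {K : Set X} (hK : K.Finite) (hKne : K.Nonempty)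
    (hKf : MapsTo f K K) {ε c : ℝ} (hε : 0 < ε) (hc : 1 ≤ c)
    (hexp : ∀ a b, dist a b ≤ ε → dist (f a) (f b) = c * dist a b) {z : X}
    (hz : ∀ n, f^[n] z ∉ K) : ¬ Tendsto (fun n => infDist (f^[n] z) K) atTop (𝓝 0) := by
  intro hlim
  set d := fun n => infDist (f^[n] z) K
  have hd : ∀ n, 0 < d n := fun n => (hK.isClosed.notMem_iff_infDist_pos hKne).1 (hz n)
  obtain ⟨r, hr, hsep⟩ := hK.exists_pos_pairwise_le_dist
  obtain ⟨N, hN⟩ := eventually_atTop.1 <| hlim.eventually <|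
    gt_mem_nhds (lt_min hε (div_pos hr (by positivity : (0 : ℝ) < 2 * c)))
  have hgrow : ∀ n, d N ≤ d (N + n) := fun n => by
    induction n with
    | zero => rfl
    | succ n ih =>
      obtain ⟨hdε, hdr⟩ := lt_min_iff.1 (hN (N + n) (Nat.le_add_right N n))
      have hstep := mul_infDist_le_infDist_image hK hKne hKf hsep hexp hdε.le
        ((lt_div_iff₀' (by positivity)).1 hdr)
      rw [← iterate_succ_apply' f] at hstep
      exact ih.trans ((le_mul_of_one_le_left (hd _).le hc).trans hstep)
  obtain ⟨M, hM⟩ := eventually_atTop.1 (hlim.eventually (gt_mem_nhds (hd N)))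
  exact (hgrow M).not_gt (hM (N + M) (Nat.le_add_left M N))

end Metric

lemma UnitAddCircle.norm_nsmul_of_norm_le {q : ℕ} {z : UnitAddCircle}
    (h : ‖z‖ ≤ 1 / (2 * q)) : ‖q • z‖ = q * ‖z‖ := by
  obtain ⟨s, rfl⟩ := QuotientAddGroup.mk_surjective z
  have hrep : ((s - round s : ℝ) : UnitAddCircle) = s := by simp
  have hnorm : ‖(s : UnitAddCircle)‖ = |s - round s| := UnitAddCircle.norm_eq
  rw [hnorm] at h
  have hqs : |q * (s - round s)| ≤ |(1 : ℝ)| / 2 := by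
    rw [abs_mul, Nat.abs_cast, abs_one]
    calc (q : ℝ) * |s - round s| ≤ q * (1 / (2 * q)) := by gcongr
      _ ≤ 1 / 2 := by
        rcases eq_or_ne (q : ℝ) 0 with hq | hq
        · simp [hq]
        · rw [mul_one_div, div_mul_cancel_right₀ hq, one_div]
  rw [hnorm, ← hrep, ← AddCircle.coe_nsmul, nsmul_eq_mul,
    (AddCircle.norm_coe_eq_abs_iff (p := 1) one_ne_zero).2 hqs, abs_mul, Nat.abs_cast]

lemma UnitAddCircle.dist_nsmul_of_dist_le {q : ℕ} {a b : UnitAddCircle}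
    (h : dist a b ≤ 1 / (2 * q)) : dist (q • a) (q • b) = q * dist a b := by
  rw [dist_eq_norm, dist_eq_norm, ← nsmul_sub] at *
  exact UnitAddCircle.norm_nsmul_of_norm_le h

lemma Irrational.injective_pow_nsmul {x : ℝ} (hx : Irrational x) {q : ℕ} (hq : 2 ≤ q) :
    Injective fun n : ℕ => q ^ n • (x : UnitAddCircle) := by
  have hx' : ¬ IsOfFinAddOrder (x : UnitAddCircle) :=
    AddCircle.not_isOfFinAddOrder_iff_forall_rat_ne_div.2 fun r hr => hx ⟨r, by simpa using hr⟩
  exact (injective_nsmul_iff_not_isOfFinAddOrder.2 hx').comp (Nat.pow_right_injective hq)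

/-- The restriction of `T_q` to the attractor `𝒪' = ⋂ i, T_q^i 𝒪` of the orbit
closure `𝒪` of an irrational point is not injective. -/
theorem timesQ_not_injective_on_attractor
    (q : ℕ) (hq : 2 ≤ q) (x : ℝ) (hx : Irrational x) :
    ¬ Set.InjOn (fun y : UnitAddCircle => q • y)
      (⋂ i : ℕ, (fun y : UnitAddCircle => q ^ i • y) ''
        closure {y : UnitAddCircle | ∃ m : ℕ, y = q ^ m • (x : UnitAddCircle)}) := by
  set T : UnitAddCircle → UnitAddCircle := (q • ·)
  set O := closure {y : UnitAddCircle | ∃ m : ℕ, y = q ^ m • (x : UnitAddCircle)}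
  have hT : Continuous T := continuous_const_smul q
  have hO : IsCompact O := isClosed_closure.isCompact
  have hTO : MapsTo T O O := MapsTo.closure (fun _ ⟨m, hm⟩ => ⟨m + 1, by
    rw [hm, pow_succ', mul_smul]⟩) hT
  have hxO : (x : UnitAddCircle) ∈ O := subset_closure ⟨0, by simp⟩
  simp_rw [← smul_iterate]
  change ¬ InjOn T (attractor T O)
  intro hinj
  have hq' : (1 : ℝ) < q := by exact_mod_cast hq
  have hε : (0 : ℝ) < 1 / (2 * q) := by positivity
  have hexp : ∀ a b, dist a b ≤ 1 / (2 * q) → dist (T a) (T b) = q * dist a b :=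
    fun _ _ => UnitAddCircle.dist_nsmul_of_dist_le
  have hK := attractor_finite_of_injOn hT hO hTO hinj hε hq' hexp
  have horbit : Injective fun n => T^[n] x := by
    simpa only [T, smul_iterate] using hx.injective_pow_nsmul hq
  exact not_tendsto_infDist_iterate_of_finite hK (attractor_nonempty hT hO hTO ⟨_, hxO⟩)
    (mapsTo_attractor hTO) hε hq'.le hexp
    (iterate_notMem_of_injective hK (mapsTo_attractor hTO) horbit)
    (tendsto_infDist_iterate_attractor hT hO hTO hxO)
end
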